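/- Let A_g = {t ∈ ℝ : sup{s ∈ [a,b] : g(s) = g(t)} ∈ D_g} and H_g = {t ∈ ℝ : t ∈ (s₁, s₂] for some s₁, s₂ ∈ D_g with (s₁, s₂) ⊂ C_g}. Define Δg* : [a,b] → ℝ by Δg*(t) = Δg(t*). Then Δg*|_{[a,b]} is g-continuous at every point of ((a*, b] \ A_g) ∪ H_g, is g-discontinuous at every point of ((a*, b) ∩ A_g) \ H_g, and is g-continuous on [a, a*] (including the degenerate case [a,a*] = {a}). -/
import Mathlib


open Set Filter Topology
open scoped Classical

noncomputable section

/-- The right-hand limit `g(t⁺)` of a nondecreasing function `g`. -/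
def rLim (g : ℝ → ℝ) (t : ℝ) : ℝ := sInf (g '' Set.Ioi t)

/-- `Δg(t) = g(t⁺) − g(t)`. -/
def jump (g : ℝ → ℝ) (t : ℝ) : ℝ := rLim g t - g t

/-- `C_g`: the set of points near which `g` is constant. -/
def Cset (g : ℝ → ℝ) : Set ℝ :=
  {t | ∃ ε > 0, ∀ u ∈ Set.Ioo (t - ε) (t + ε), g u = g t}

/-- `D_g`: the set of discontinuity points of `g`. -/
def Dset (g : ℝ → ℝ) : Set ℝ := {t | 0 < jump g t}

/-- The right endpoints `b_n` of the connected components of the open set `C_g`. -/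
def rightEndpoints (g : ℝ → ℝ) : Set ℝ :=
  {x | x ∉ Cset g ∧ ∃ s, s < x ∧ Set.Ioo s x ⊆ Cset g}

/-- The left endpoints `a_n` of the connected components of the open set `C_g`. -/
def leftEndpoints (g : ℝ → ℝ) : Set ℝ :=
  {x | x ∉ Cset g ∧ ∃ s, x < s ∧ Set.Ioo x s ⊆ Cset g}

/-- `N_g⁻ = {a_n : n ∈ Λ} \ D_g`. -/
def Nminus (g : ℝ → ℝ) : Set ℝ := leftEndpoints g \ Dset g

/-- `N_g⁺ = {b_n : n ∈ Λ} \ D_g`. -/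
def Nplus (g : ℝ → ℝ) : Set ℝ := rightEndpoints g \ Dset g

/-- `N_g = N_g⁻ ∪ N_g⁺`. -/
def Nset (g : ℝ → ℝ) : Set ℝ := Nminus g ∪ Nplus g

/-- `t* = t` if `t ∉ C_g`, and `t* = b_n` (the right endpoint of the connected component
`(a_n, b_n)` of `C_g` containing `t`) if `t ∈ C_g`. -/
def tstar (g : ℝ → ℝ) (t : ℝ) : ℝ :=
  if t ∈ Cset g then sSup (connectedComponentIn (Cset g) t) else t

/-- The filter along which the Stieltjes difference quotient is taken at a point of `[a,b]`:
from the right at points of `D_g ∪ N_g⁺ ∪ {a}`, from the left at points of `N_g⁻ ∪ {b}`,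
two-sided otherwise. -/
def sFilter (g : ℝ → ℝ) (a b t : ℝ) : Filter ℝ :=
  if t ∈ Dset g ∨ t ∈ Nplus g ∨ t = a then 𝓝[Set.Ioi t ∩ Set.Icc a b] t
  else if t ∈ Nminus g ∨ t = b then 𝓝[Set.Iio t ∩ Set.Icc a b] t
  else 𝓝[Set.Icc a b \ {t}] t

/-- `f` has Stieltjes derivative (`g`-derivative) `L` at `t`, relative to `[a,b]`. -/
def HasSDerivAt {K : Type*} [RCLike K] (g : ℝ → ℝ) (a b : ℝ) (f : ℝ → K) (t : ℝ) (L : K) :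
    Prop :=
  Filter.Tendsto (fun s => (g s - g (tstar g t))⁻¹ • (f s - f (tstar g t)))
    (sFilter g a b (tstar g t)) (𝓝 L)

/-- `f` is `g`-differentiable at `t`, relative to `[a,b]`. -/
def SDiffAt {K : Type*} [RCLike K] (g : ℝ → ℝ) (a b : ℝ) (f : ℝ → K) (t : ℝ) : Prop :=
  ∃ L, HasSDerivAt g a b f t L

/-- `f` is `g`-continuous at `t` relative to the domain `D`. -/
def GContAt {K : Type*} [RCLike K] (g : ℝ → ℝ) (f : ℝ → K) (D : Set ℝ) (t : ℝ) : Prop :=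
  ∀ ε > 0, ∃ δ > 0, ∀ s ∈ D, |g t - g s| < δ → ‖f t - f s‖ < ε

/-- `D₁`: points of `[a,b] ∩ N_g⁻` accumulating `D_g ∩ [a,t)`. -/
def D1 (g : ℝ → ℝ) (a b : ℝ) : Set ℝ :=
  {x | x ∈ Set.Icc a b ∩ Nminus g ∧ AccPt x (𝓟 (Dset g ∩ Set.Ico a x))}

/-- `D₂`: points of `[a,b] ∩ N_g⁺` accumulating `D_g ∩ (t,b]`. -/
def D2 (g : ℝ → ℝ) (a b : ℝ) : Set ℝ :=
  {x | x ∈ Set.Icc a b ∩ Nplus g ∧ AccPt x (𝓟 (Dset g ∩ Set.Ioc x b))}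

/-- `D₃`: points of `[a,b] \ (N_g ∪ D_g)` accumulating `D_g ∩ [a,b]`. -/
def D3 (g : ℝ → ℝ) (a b : ℝ) : Set ℝ :=
  {x | x ∈ Set.Icc a b \ (Nset g ∪ Dset g) ∧ AccPt x (𝓟 (Dset g ∩ Set.Icc a b))}

/-- `D̃₁`: points of `[a,b] ∩ N_g⁻` not accumulating `D_g ∩ [a,t)`. -/
def Dt1 (g : ℝ → ℝ) (a b : ℝ) : Set ℝ :=
  {x | x ∈ Set.Icc a b ∩ Nminus g ∧ ¬ AccPt x (𝓟 (Dset g ∩ Set.Ico a x))}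

/-- `D̃₂`: points of `[a,b] ∩ (N_g⁺ ∪ D_g)` not accumulating `D_g ∩ (t,b]`. -/
def Dt2 (g : ℝ → ℝ) (a b : ℝ) : Set ℝ :=
  {x | x ∈ Set.Icc a b ∩ (Nplus g ∪ Dset g) ∧ ¬ AccPt x (𝓟 (Dset g ∩ Set.Ioc x b))}

/-- `D̃₃`: points of `[a,b] \ (C_g ∪ N_g ∪ D_g)` not accumulating `D_g ∩ [a,b]`. -/
def Dt3 (g : ℝ → ℝ) (a b : ℝ) : Set ℝ :=
  {x | x ∈ Set.Icc a b \ (Cset g ∪ Nset g ∪ Dset g) ∧ ¬ AccPt x (𝓟 (Dset g ∩ Set.Icc a b))}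

/-- `C₁`: points of `[a,b] ∩ N_g⁻` accumulating `C_g ∩ [a,t)`. -/
def C1 (g : ℝ → ℝ) (a b : ℝ) : Set ℝ :=
  {x | x ∈ Set.Icc a b ∩ Nminus g ∧ AccPt x (𝓟 (Cset g ∩ Set.Ico a x))}

/-- `C₂`: points of `[a,b] ∩ (N_g⁺ ∪ D_g)` accumulating `C_g ∩ (t,b]`. -/
def C2 (g : ℝ → ℝ) (a b : ℝ) : Set ℝ :=
  {x | x ∈ Set.Icc a b ∩ (Nplus g ∪ Dset g) ∧ AccPt x (𝓟 (Cset g ∩ Set.Ioc x b))}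

/-- `C₃`: points of `[a,b] \ (C_g ∪ N_g ∪ D_g)` accumulating `C_g ∩ [a,b]`. -/
def C3 (g : ℝ → ℝ) (a b : ℝ) : Set ℝ :=
  {x | x ∈ Set.Icc a b \ (Cset g ∪ Nset g ∪ Dset g) ∧ AccPt x (𝓟 (Cset g ∩ Set.Icc a b))}

/-- `A_g = {t : sup{s ∈ [a,b] : g(s) = g(t)} ∈ D_g}`. -/
def Ag (g : ℝ → ℝ) (a b : ℝ) : Set ℝ :=
  {t | sSup {s | s ∈ Set.Icc a b ∧ g s = g t} ∈ Dset g}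

/-- `H_g`: points lying in some `(s₁, s₂]` with `s₁, s₂ ∈ D_g` and `(s₁, s₂) ⊆ C_g`. -/
def Hg (g : ℝ → ℝ) : Set ℝ :=
  {t | ∃ s₁ ∈ Dset g, ∃ s₂ ∈ Dset g, t ∈ Set.Ioc s₁ s₂ ∧ Set.Ioo s₁ s₂ ⊆ Cset g}

/-- Membership in `BC_g([a,b], K)`: bounded and `g`-continuous on `[a,b]`. -/
def MemBCg {K : Type*} [RCLike K] (g : ℝ → ℝ) (a b : ℝ) (f : ℝ → K) : Prop :=
  (∃ M, ∀ s ∈ Set.Icc a b, ‖f s‖ ≤ M) ∧ ∀ s ∈ Set.Icc a b, GContAt g f (Set.Icc a b) s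

/-- Membership in `BC¹_g([a,b], K)`. -/
def MemBC1g {K : Type*} [RCLike K] (g : ℝ → ℝ) (a b : ℝ) (f : ℝ → K) : Prop :=
  MemBCg g a b f ∧
    ∃ f' : ℝ → K, (∀ s ∈ Set.Icc a b, HasSDerivAt g a b f s (f' s)) ∧ MemBCg g a b f'

section Aux
variable {g : ℝ → ℝ}

lemma lem_bddBelow (hg : Monotone g) (t : ℝ) : BddBelow (g '' Set.Ioi t) :=
  ⟨g t, fun x ⟨y, hy, e⟩ => e ▸ hg (le_of_lt hy)⟩

lemma lem_rLim_le (hg : Monotone g) {t u : ℝ} (h : t < u) : rLim g t ≤ g u :=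
  csInf_le (lem_bddBelow hg t) ⟨u, h, rfl⟩

lemma lem_le_rLim (hg : Monotone g) (t : ℝ) : g t ≤ rLim g t :=
  le_csInf ⟨g (t + 1), t + 1, Set.mem_Ioi.mpr (lt_add_one t), rfl⟩ (fun x ⟨y, hy, e⟩ => e ▸ hg (le_of_lt hy))

lemma lem_jump_nonneg (hg : Monotone g) (t : ℝ) : 0 ≤ jump g t :=
  sub_nonneg.2 (lem_le_rLim hg t)

lemma lem_const_right (hlc : ∀ x : ℝ, ContinuousWithinAt g (Set.Iio x) x)
    {s t c : ℝ} (h : s < t) (hc : ∀ u ∈ Set.Ioo s t, g u = c) : g t = c := by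
  have h1 : Filter.Tendsto g (𝓝[Set.Iio t] t) (𝓝 (g t)) := hlc t
  have h2 : Filter.Tendsto g (𝓝[Set.Iio t] t) (𝓝 c) := by
    have he : ∀ᶠ u in 𝓝[Set.Iio t] t, g u = c := by
      filter_upwards [self_mem_nhdsWithin,
        eventually_nhdsWithin_of_eventually_nhds (eventually_gt_nhds h)] with u hu1 hu2
      exact hc u ⟨hu2, hu1⟩
    exact Filter.Tendsto.congr' (Filter.EventuallyEq.symm he) tendsto_const_nhds
  exact tendsto_nhds_unique h1 h2

lemma lem_exists_left (hlc : ∀ x : ℝ, ContinuousWithinAt g (Set.Iio x) x)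
    {t c η : ℝ} (hgt : c < g t) (hη : 0 < η) : ∃ s, s ∈ Set.Ioo (t - η) t ∧ c < g s := by
  have h1 : ∀ᶠ u in 𝓝[Set.Iio t] t, c < g u := (hlc t).eventually (eventually_gt_nhds hgt)
  have h2 : ∀ᶠ u in 𝓝[Set.Iio t] t, t - η < u :=
    eventually_nhdsWithin_of_eventually_nhds (eventually_gt_nhds (by linarith))
  have h3 : ∀ᶠ u in 𝓝[Set.Iio t] t, u < t := eventually_mem_nhdsWithin.mono (fun u hu => hu)
  rcases (h1.and (h2.and h3)).exists with ⟨s, hs1, hs2, hs3⟩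
  exact ⟨s, ⟨hs2, hs3⟩, hs1⟩

lemma lem_mem_C (hg : Monotone g) {x u y : ℝ} (hxu : x < u) (huy : u < y)
    (hxy : g x = g y) : u ∈ Cset g := by
  refine ⟨min (u - x) (y - u), by simp [hxu, huy], fun w hw => ?_⟩
  have hw1 : x ≤ w := by
    have h := min_le_left (u - x) (y - u); have h2 := hw.1; linarith
  have hw2 : w ≤ y := by nlinarith [hw.2, min_le_right (u - x) (y - u)]
  have e1 : g w = g x := le_antisymm (hxy ▸ hg hw2) (hg hw1)
  have e2 : g u = g x := le_antisymm (hxy ▸ hg huy.le) (hg hxu.le)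
  rw [e1, e2]

lemma lem_Ioo_subset_C (hg : Monotone g) {x y : ℝ} (hxy : g x = g y) :
    Set.Ioo x y ⊆ Cset g := fun u hu => lem_mem_C hg hu.1 hu.2 hxy

lemma lem_C_open : IsOpen (Cset g) := by
  rw [isOpen_iff_mem_nhds]
  rintro t ⟨ε, hε, hconst⟩
  have hsub : Set.Ioo (t - ε) (t + ε) ⊆ Cset g := by
    intro u hu
    refine ⟨min (u - (t - ε)) (t + ε - u), by simp [hu.1, hu.2], fun w hw => ?_⟩
    have hw1 : t - ε < w := by nlinarith [hw.1, min_le_left (u - (t - ε)) (t + ε - u)]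
    have hw2 : w < t + ε := by nlinarith [hw.2, min_le_right (u - (t - ε)) (t + ε - u)]
    rw [hconst w ⟨hw1, hw2⟩, hconst u hu]
  exact Filter.mem_of_superset (Ioo_mem_nhds (by linarith) (by linarith)) hsub

lemma lem_jump_C (hg : Monotone g) {t : ℝ} (ht : t ∈ Cset g) : jump g t = 0 := by
  obtain ⟨ε, hε, hconst⟩ := ht
  have h1 : rLim g t ≤ g (t + ε / 2) := lem_rLim_le hg (by linarith)
  have h2 : g (t + ε / 2) = g t := hconst _ ⟨by linarith, by linarith⟩
  have := lem_le_rLim hg t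
  simp only [jump]; rw [h2] at h1; linarith

lemma lem_not_C_of_D {t : ℝ} (hg : Monotone g) (ht : t ∈ Dset g) : t ∉ Cset g :=
  fun hc => by have := lem_jump_C hg hc; have : (0:ℝ) < 0 := by
                 have h2 : 0 < jump g t := ht; linarith
               linarith

lemma lem_Lconst (hg : Monotone g) (hlc : ∀ x : ℝ, ContinuousWithinAt g (Set.Iio x) x)
    {x y : ℝ} (h : Set.Ioo x y ⊆ Cset g) {u u' : ℝ} (hu : u ∈ Set.Ioo x y)
    (hu' : u' ∈ Set.Ioo x y) (huu : u ≤ u') : g u = g u' := by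
  set S : Set ℝ := {z | z ∈ Set.Icc u u' ∧ g z = g u} with hS
  have hSne : S.Nonempty := ⟨u, ⟨le_refl u, huu⟩, rfl⟩
  have hSbdd : BddAbove S := ⟨u', fun z hz => hz.1.2⟩
  set w := sSup S with hw
  have hwu : u ≤ w := le_csSup hSbdd ⟨⟨le_refl u, huu⟩, rfl⟩
  have hwu' : w ≤ u' := csSup_le hSne (fun z hz => hz.1.2)
  have hgw : g w = g u := by
    rcases eq_or_lt_of_le hwu with he | hlt
    · rw [← he]
    · refine lem_const_right hlc hlt (fun z hz => ?_)
      obtain ⟨p, hp, hzp⟩ := exists_lt_of_lt_csSup hSne hz.2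
      exact le_antisymm (hp.2 ▸ hg hzp.le) (hg hz.1.le)
  rcases eq_or_lt_of_le hwu' with he | hlt
  · rw [← hgw, he]
  · -- w < u', use constancy near w to push past w: contradiction
    exfalso
    have hwC : w ∈ Cset g := h ⟨lt_of_lt_of_le hu.1 hwu, lt_of_le_of_lt hwu' hu'.2⟩
    obtain ⟨ε, hε, hconst⟩ := hwC
    set z := min u' (w + ε / 2) with hz
    have hzw : w < z := lt_min hlt (by linarith)
    have hzmem : z ∈ Set.Ioo (w - ε) (w + ε) :=
      ⟨by linarith, lt_of_le_of_lt (min_le_right _ _) (by linarith)⟩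
    have hgz : g z = g u := by rw [hconst z hzmem, hgw]
    have : z ∈ S := ⟨⟨le_trans hwu hzw.le, min_le_left _ _⟩, hgz⟩
    exact absurd (le_csSup hSbdd this) (not_le.2 hzw)
end Aux
section Aux2
variable {g : ℝ → ℝ}

lemma lem_comp_ord {s : ℝ} : (connectedComponentIn (Cset g) s).OrdConnected :=
  (isPreconnected_connectedComponentIn).ordConnected

lemma lem_comp_subset_Iic {s b : ℝ} (hsb : s ≤ b) (hbC : b ∉ Cset g) (hs : s ∈ Cset g) :
    connectedComponentIn (Cset g) s ⊆ Set.Iic b := by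
  intro u hu
  by_contra hub
  simp only [Set.mem_Iic, not_le] at hub
  have hb : b ∈ connectedComponentIn (Cset g) s :=
    lem_comp_ord.out (mem_connectedComponentIn hs) hu ⟨hsb, hub.le⟩
  exact hbC (connectedComponentIn_subset _ _ hb)

lemma lem_const_comp (hg : Monotone g) (hlc : ∀ x : ℝ, ContinuousWithinAt g (Set.Iio x) x)
    {s : ℝ} (hs : s ∈ Cset g) {u : ℝ} (hu : u ∈ connectedComponentIn (Cset g) s) :
    g u = g s := by
  have hIopen : IsOpen (connectedComponentIn (Cset g) s) := lem_C_open.connectedComponentIn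
  have hsI : s ∈ connectedComponentIn (Cset g) s := mem_connectedComponentIn hs
  have hIC : connectedComponentIn (Cset g) s ⊆ Cset g := connectedComponentIn_subset _ _
  obtain ⟨εs, hεs, hbs⟩ := Metric.isOpen_iff.1 hIopen s hsI
  obtain ⟨εu, hεu, hbu⟩ := Metric.isOpen_iff.1 hIopen u hu
  rcases le_total s u with hsu | hus
  · have hsub : Set.Ioo (s - εs) (u + εu) ⊆ Cset g := by
      intro z hz
      rcases le_total z s with h1 | h1
      · exact hIC (hbs (by rw [Metric.mem_ball, Real.dist_eq, abs_lt]; constructor <;> [linarith [hz.1]; linarith [hεs]]))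
      · rcases le_total u z with h2 | h2
        · exact hIC (hbu (by rw [Metric.mem_ball, Real.dist_eq, abs_lt]; constructor <;> [linarith [hεu]; linarith [hz.2]]))
        · exact hIC (lem_comp_ord.out hsI hu ⟨h1, h2⟩)
    exact (lem_Lconst hg hlc hsub ⟨by linarith, by linarith⟩ ⟨by linarith, by linarith⟩ hsu).symm
  · have hsub : Set.Ioo (u - εu) (s + εs) ⊆ Cset g := by
      intro z hz
      rcases le_total z u with h1 | h1
      · exact hIC (hbu (by rw [Metric.mem_ball, Real.dist_eq, abs_lt]; constructor <;> [linarith [hz.1]; linarith [hεu]]))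
      · rcases le_total s z with h2 | h2
        · exact hIC (hbs (by rw [Metric.mem_ball, Real.dist_eq, abs_lt]; constructor <;> [linarith [hεs]; linarith [hz.2]]))
        · exact hIC (lem_comp_ord.out hu hsI ⟨h1, h2⟩)
    exact lem_Lconst hg hlc hsub ⟨by linarith, by linarith⟩ ⟨by linarith, by linarith⟩ hus

variable {b : ℝ}

lemma lem_le_tstar (hbC : b ∉ Cset g) {s : ℝ} (hsb : s ≤ b) : s ≤ tstar g s := by
  unfold tstar
  split_ifs with h
  · exact le_csSup ⟨b, lem_comp_subset_Iic hsb hbC h⟩ (mem_connectedComponentIn h)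
  · exact le_refl s

lemma lem_tstar_le (hbC : b ∉ Cset g) {s : ℝ} (hsb : s ≤ b) : tstar g s ≤ b := by
  unfold tstar
  split_ifs with h
  · exact csSup_le ⟨s, mem_connectedComponentIn h⟩ (lem_comp_subset_Iic hsb hbC h)
  · exact hsb

lemma lem_Ioo_subset_comp (hbC : b ∉ Cset g) {s : ℝ} (hsb : s ≤ b) (hs : s ∈ Cset g) :
    Set.Ioo s (tstar g s) ⊆ connectedComponentIn (Cset g) s := by
  intro z hz
  have h2 := hz.2
  unfold tstar at h2
  rw [if_pos hs] at h2
  obtain ⟨i, hi, hzi⟩ := exists_lt_of_lt_csSup ⟨s, mem_connectedComponentIn hs⟩ h2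
  exact lem_comp_ord.out (mem_connectedComponentIn hs) hi ⟨hz.1.le, hzi.le⟩

lemma lem_g_tstar (hg : Monotone g) (hlc : ∀ x : ℝ, ContinuousWithinAt g (Set.Iio x) x)
    (hbC : b ∉ Cset g) {s : ℝ} (hsb : s ≤ b) : g (tstar g s) = g s := by
  by_cases hs : s ∈ Cset g
  · rcases eq_or_lt_of_le (lem_le_tstar hbC hsb) with he | hlt
    · rw [← he]
    · refine lem_const_right hlc hlt (fun z hz => ?_)
      exact lem_const_comp hg hlc hs (lem_Ioo_subset_comp hbC hsb hs hz)
  · unfold tstar; rw [if_neg hs]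

lemma lem_tstar_notC (hbC : b ∉ Cset g) {s : ℝ} (hsb : s ≤ b) : tstar g s ∉ Cset g := by
  by_cases hs : s ∈ Cset g
  · intro hy
    set y := tstar g s with hydef
    obtain ⟨ε, hε, hconst⟩ := hy
    have hysup : y = sSup (connectedComponentIn (Cset g) s) := by
      rw [hydef]; unfold tstar; rw [if_pos hs]
    have hJ : Set.Ioo (y - ε) (y + ε) ⊆ Cset g := by
      intro z hz
      refine ⟨min (z - (y - ε)) (y + ε - z), by simp [hz.1, hz.2], fun w hw => ?_⟩
      have hw1 : y - ε < w := by
        have h := min_le_left (z - (y - ε)) (y + ε - z); have h2 := hw.1; linarith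
      have hw2 : w < y + ε := by
        have h := min_le_right (z - (y - ε)) (y + ε - z); have h2 := hw.2; linarith
      rw [hconst w ⟨hw1, hw2⟩, hconst z hz]
    have hne : (connectedComponentIn (Cset g) s).Nonempty := ⟨s, mem_connectedComponentIn hs⟩
    have hbdd : BddAbove (connectedComponentIn (Cset g) s) :=
      ⟨b, lem_comp_subset_Iic hsb hbC hs⟩
    have hlt2 : y - ε < sSup (connectedComponentIn (Cset g) s) := by rw [← hysup]; linarith
    obtain ⟨i, hi, hgi⟩ := exists_lt_of_lt_csSup hne hlt2
    have hiJ : i ∈ Set.Ioo (y - ε) (y + ε) :=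
      ⟨hgi, lt_of_le_of_lt (hysup ▸ le_csSup hbdd hi) (by linarith)⟩
    have hJI : Set.Ioo (y - ε) (y + ε) ⊆ connectedComponentIn (Cset g) s := by
      rw [connectedComponentIn_eq hi]
      exact isPreconnected_Ioo.subset_connectedComponentIn hiJ hJ
    have : y + ε / 2 ∈ connectedComponentIn (Cset g) s := hJI ⟨by linarith, by linarith⟩
    have := le_csSup hbdd this
    rw [← hysup] at this; linarith
  · unfold tstar; rw [if_neg hs]; exact hs

lemma lem_lt_tstar (hbC : b ∉ Cset g) {s : ℝ} (hsb : s ≤ b) (hs : s ∈ Cset g) : s < tstar g s := by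
  rcases eq_or_lt_of_le (lem_le_tstar hbC hsb) with he | h
  · exact absurd hs (he ▸ lem_tstar_notC hbC hsb)
  · exact h
end Aux2
section Aux3
variable {g : ℝ → ℝ} {a b : ℝ}

/-- the plateau of `t` within `[a,b]` -/
def Pset (g : ℝ → ℝ) (a b t : ℝ) : Set ℝ := {s | s ∈ Set.Icc a b ∧ g s = g t}

lemma lem_P_bddAbove (t : ℝ) : BddAbove (Pset g a b t) := ⟨b, fun s hs => hs.1.2⟩

lemma lem_P_ne {t : ℝ} (ht : t ∈ Set.Icc a b) : (Pset g a b t).Nonempty := ⟨t, ht, rfl⟩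

lemma lem_le_sigma {t : ℝ} (ht : t ∈ Set.Icc a b) : t ≤ sSup (Pset g a b t) :=
  le_csSup (lem_P_bddAbove t) ⟨ht, rfl⟩

lemma lem_sigma_mem (hg : Monotone g) (hlc : ∀ x : ℝ, ContinuousWithinAt g (Set.Iio x) x)
    {t : ℝ} (ht : t ∈ Set.Icc a b) : sSup (Pset g a b t) ∈ Pset g a b t := by
  set σ := sSup (Pset g a b t) with hσ
  have h1 : t ≤ σ := lem_le_sigma ht
  have hσb : σ ≤ b := csSup_le (lem_P_ne ht) (fun s hs => hs.1.2)
  have hσa : a ≤ σ := le_trans ht.1 h1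
  have hgσ : g σ = g t := by
    rcases eq_or_lt_of_le h1 with he | hlt
    · rw [← he]
    · refine lem_const_right hlc hlt (fun z hz => ?_)
      obtain ⟨p, hp, hzp⟩ := exists_lt_of_lt_csSup (lem_P_ne ht) hz.2
      exact le_antisymm (le_of_le_of_eq (hg hzp.le) hp.2) (hg hz.1.le)
  exact ⟨⟨hσa, hσb⟩, hgσ⟩

lemma lem_tstar_mem_P (hg : Monotone g) (hlc : ∀ x : ℝ, ContinuousWithinAt g (Set.Iio x) x)
    (hbC : b ∉ Cset g) {t s : ℝ} (hs : s ∈ Pset g a b t) : tstar g s ∈ Pset g a b t := by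
  refine ⟨⟨le_trans hs.1.1 (lem_le_tstar hbC hs.1.2), lem_tstar_le hbC hs.1.2⟩, ?_⟩
  rw [lem_g_tstar hg hlc hbC hs.1.2, hs.2]

lemma lem_below (hg : Monotone g) (hlc : ∀ x : ℝ, ContinuousWithinAt g (Set.Iio x) x)
    (hbC : b ∉ Cset g) {t s : ℝ} (ht : t ∈ Set.Icc a b) (hs : s ∈ Set.Icc a b)
    (h : g s < g t) : jump g (tstar g s) ≤ g t - g s := by
  have hσ := lem_sigma_mem hg hlc ht (g := g)
  have hgs : g (tstar g s) = g s := lem_g_tstar hg hlc hbC hs.2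
  have hlt : tstar g s < sSup (Pset g a b t) := by
    by_contra hcon
    push_neg at hcon
    have := hg hcon
    rw [hgs, hσ.2] at this
    linarith
  have := lem_rLim_le hg hlt
  rw [hσ.2] at this
  simp only [jump]
  rw [hgs]
  linarith

lemma lem_eqv (hg : Monotone g) (hlc : ∀ x : ℝ, ContinuousWithinAt g (Set.Iio x) x)
    (hbC : b ∉ Cset g) {t : ℝ} (ht : t ∈ Set.Icc a b)
    (hσD : sSup (Pset g a b t) ∉ Dset g) {s : ℝ} (hs : s ∈ Pset g a b t) :
    jump g (tstar g s) = 0 := by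
  have hmem := lem_tstar_mem_P hg hlc hbC hs (t := t)
  have hle : tstar g s ≤ sSup (Pset g a b t) := le_csSup (lem_P_bddAbove t) hmem
  have hσ := lem_sigma_mem hg hlc ht (g := g)
  rcases eq_or_lt_of_le hle with he | hlt
  · have : ¬ 0 < jump g (sSup (Pset g a b t)) := hσD
    have h2 := lem_jump_nonneg hg (tstar g s)
    rw [he]
    linarith [lem_jump_nonneg hg (sSup (Pset g a b t))]
  · have h1 := lem_rLim_le hg hlt
    rw [hσ.2] at h1
    have h2 : g (tstar g s) = g t := hmem.2
    have h3 := lem_jump_nonneg hg (tstar g s)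
    simp only [jump] at h3 ⊢
    linarith

lemma lem_above (hg : Monotone g) (hlc : ∀ x : ℝ, ContinuousWithinAt g (Set.Iio x) x)
    (hbC : b ∉ Cset g) (t : ℝ) {ε : ℝ} (hε : 0 < ε) :
    ∃ δ, 0 < δ ∧ δ ≤ ε ∧ ∀ s ∈ Set.Icc a b, g t < g s → g s < g t + δ →
      jump g (tstar g s) < ε := by
  by_cases hE : ∃ e ∈ Set.Icc a b, g t < g e ∧ g e < g t + ε ∧ ε ≤ jump g (tstar g e)
  · obtain ⟨e, he, h1, h2, h3⟩ := hE
    refine ⟨min ε (g e - g t), lt_min hε (by linarith), min_le_left _ _, ?_⟩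
    intro s hs hs1 hs2
    by_contra hcon
    push_neg at hcon
    have hse : g s < g e := by
      have := min_le_right ε (g e - g t); linarith
    have hgts : g (tstar g s) = g s := lem_g_tstar hg hlc hbC hs.2
    have hlt : tstar g s < e := by
      by_contra hc; push_neg at hc
      have := hg hc; rw [hgts] at this; linarith
    have h4 := lem_rLim_le hg hlt
    simp only [jump] at hcon
    rw [hgts] at hcon
    have : g e < g t + ε := h2
    linarith
  · push_neg at hE
    exact ⟨ε, hε, le_refl ε, fun s hs h1 h2 => hE s hs h1 h2⟩

/-- ball collapse helper -/
lemma lem_ball_collapse {F : ℝ → ℝ} {t : ℝ}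
    (h : ∃ δ > 0, ∀ s ∈ Set.Icc a b, |g t - g s| < δ → F s = F t) :
    GContAt g F (Set.Icc a b) t := by
  obtain ⟨δ, hδ, hcol⟩ := h
  intro ε hε
  exact ⟨δ, hδ, fun s hs hgs => by rw [hcol s hs hgs]; simpa using hε⟩

/-- MAIN1: continuity when σ(t) is not a jump point -/
lemma lem_main1 (hg : Monotone g) (hlc : ∀ x : ℝ, ContinuousWithinAt g (Set.Iio x) x)
    (hbC : b ∉ Cset g) {t : ℝ} (ht : t ∈ Set.Icc a b)
    (hσD : sSup (Pset g a b t) ∉ Dset g) :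
    GContAt g (fun s => jump g (tstar g s)) (Set.Icc a b) t := by
  intro ε hε
  obtain ⟨δ, hδ, hδε, habove⟩ := lem_above (a := a) hg hlc hbC t hε
  refine ⟨δ, hδ, fun s hs hgs => ?_⟩
  have hFt : jump g (tstar g t) = 0 := lem_eqv hg hlc hbC ht hσD ⟨ht, rfl⟩
  simp only [Real.norm_eq_abs]
  rcases lt_trichotomy (g s) (g t) with h | h | h
  · have h1 := lem_below hg hlc hbC ht hs h
    have h2 := lem_jump_nonneg hg (tstar g s)
    rw [hFt]
    rw [abs_lt] at hgs ⊢
    constructor <;> linarith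
  · have hFs : jump g (tstar g s) = 0 := lem_eqv hg hlc hbC ht hσD ⟨hs, h⟩
    rw [hFt, hFs]; simpa using hε
  · have h1 : g s < g t + δ := by rw [abs_lt] at hgs; linarith
    have h2 := habove s hs h h1
    have h3 := lem_jump_nonneg hg (tstar g s)
    rw [hFt]
    rw [abs_lt]
    constructor <;> linarith
end Aux3
section Aux4
variable {g : ℝ → ℝ} {a b : ℝ}

lemma lem_Hg_cont (hg : Monotone g) (hlc : ∀ x : ℝ, ContinuousWithinAt g (Set.Iio x) x)
    {t : ℝ} (ht : t ∈ Hg g) :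
    GContAt g (fun s => jump g (tstar g s)) (Set.Icc a b) t := by
  obtain ⟨s₁, h1D, s₂, h2D, htI, hC⟩ := ht
  have h12 : s₁ < s₂ := lt_of_lt_of_le htI.1 htI.2
  have hval : ∀ u ∈ Set.Ioc s₁ s₂, g u = g s₂ := by
    intro u hu
    rcases eq_or_lt_of_le hu.2 with he | hlt
    · rw [he]
    · have mid : ∀ z ∈ Set.Ioo u s₂, g z = g u := fun z hz =>
        (lem_Lconst hg hlc hC ⟨hu.1, hlt⟩ ⟨lt_trans hu.1 hz.1, hz.2⟩ hz.1.le).symm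
      exact (lem_const_right hlc hlt mid).symm
  have hmid : g ((s₁ + s₂) / 2) = g s₂ := hval _ ⟨by linarith, by linarith⟩
  have hr1 : rLim g s₁ ≤ g s₂ := hmid ▸ lem_rLim_le hg (by linarith)
  have hj1 : 0 < jump g s₁ := h1D
  have hj2 : 0 < jump g s₂ := h2D
  have hgs1 : g s₁ < g s₂ := by simp only [jump] at hj1; linarith
  have hloc : ∀ s, g s = g s₂ → s ∈ Set.Ioc s₁ s₂ := by
    intro s hgs
    constructor
    · by_contra hcon; push_neg at hcon
      have := hg hcon; rw [hgs] at this; linarith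
    · by_contra hcon; push_neg at hcon
      have := lem_rLim_le hg hcon
      rw [hgs] at this; simp only [jump] at hj2; linarith
  have hs2C : s₂ ∉ Cset g := lem_not_C_of_D hg h2D
  have hs1C : s₁ ∉ Cset g := lem_not_C_of_D hg h1D
  have htstar : ∀ s, g s = g s₂ → tstar g s = s₂ := by
    intro s hgs
    have hsI := hloc s hgs
    rcases eq_or_lt_of_le hsI.2 with he | hlt
    · rw [he]; unfold tstar; rw [if_neg hs2C]
    · have hsC : s ∈ Cset g := hC ⟨hsI.1, hlt⟩
      have sub1 : Set.Ioo s₁ s₂ ⊆ connectedComponentIn (Cset g) s :=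
        isPreconnected_Ioo.subset_connectedComponentIn ⟨hsI.1, hlt⟩ hC
      have sub2 : connectedComponentIn (Cset g) s ⊆ Set.Ioo s₁ s₂ := by
        intro u hu
        have hsmem : s ∈ connectedComponentIn (Cset g) s := mem_connectedComponentIn hsC
        constructor
        · by_contra hcon; push_neg at hcon
          exact hs1C (connectedComponentIn_subset _ _
            (lem_comp_ord.out hu hsmem ⟨hcon, hsI.1.le⟩))
        · by_contra hcon; push_neg at hcon
          exact hs2C (connectedComponentIn_subset _ _
            (lem_comp_ord.out hsmem hu ⟨hlt.le, hcon⟩))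
      unfold tstar
      rw [if_pos hsC, subset_antisymm sub2 sub1, csSup_Ioo h12]
  have hgt : g t = g s₂ := hval t htI
  apply lem_ball_collapse
  refine ⟨min (jump g s₁) (jump g s₂), lt_min hj1 hj2, fun s hs hgs => ?_⟩
  have hgseq : g s = g s₂ := by
    rcases lt_trichotomy (g s) (g s₂) with h | h | h
    · exfalso
      have hss1 : s ≤ s₁ := by
        by_contra hcon; push_neg at hcon
        rcases le_or_gt s s₂ with h2 | h2
        · exact absurd (hval s ⟨hcon, h2⟩) (ne_of_lt h)
        · have := lem_rLim_le hg h2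
          simp only [jump] at hj2; linarith
      have h1 : g s ≤ g s₁ := hg hss1
      have h2 : g t - g s < min (jump g s₁) (jump g s₂) := by
        rw [abs_lt] at hgs; linarith
      have h3 := min_le_left (jump g s₁) (jump g s₂)
      have hj1' : jump g s₁ = rLim g s₁ - g s₁ := rfl
      rw [hgt] at h2
      linarith
    · exact h
    · exfalso
      have hs2s : s₂ < s := by
        by_contra hcon; push_neg at hcon
        exact absurd (hg hcon) (not_le.2 h)
      have h4 := lem_rLim_le hg hs2s
      have h5 : g s - g t < min (jump g s₁) (jump g s₂) := by
        rw [abs_lt] at hgs; linarith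
      have h6 := min_le_right (jump g s₁) (jump g s₂)
      have hj2' : jump g s₂ = rLim g s₂ - g s₂ := rfl
      rw [hgt] at h5
      linarith
  show jump g (tstar g s) = jump g (tstar g t)
  rw [htstar s hgseq, htstar t hgt]
end Aux4
section Aux5
variable {g : ℝ → ℝ} {a b : ℝ}

lemma lem_sSup_Pa (hg : Monotone g) (hlc : ∀ x : ℝ, ContinuousWithinAt g (Set.Iio x) x)
    (hab : a ≤ b) (haN : a ∉ Nminus g ∪ Dset g) (hbC : b ∉ Cset g) :
    sSup (Pset g a b a) = tstar g a := by
  have haIcc : a ∈ Set.Icc a b := ⟨le_refl a, hab⟩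
  have haA : a ≤ tstar g a := lem_le_tstar hbC hab
  have hAb : tstar g a ≤ b := lem_tstar_le hbC hab
  have hgA : g (tstar g a) = g a := lem_g_tstar hg hlc hbC hab
  have hσmem := lem_sigma_mem hg hlc haIcc (g := g)
  have hσA : sSup (Pset g a b a) ≤ tstar g a := by
    by_contra hcon
    push_neg at hcon
    rcases eq_or_lt_of_le haA with he | hlt
    · -- a = tstar g a, so a ∉ Cset g and a is a left endpoint
      have haC : a ∉ Cset g := fun hc => absurd he.symm (ne_of_gt (lem_lt_tstar hbC hab hc))
      rw [← he] at hcon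
      have hLE : a ∈ leftEndpoints g :=
        ⟨haC, sSup (Pset g a b a), hcon, lem_Ioo_subset_C hg hσmem.2.symm⟩
      rcases Classical.em (a ∈ Dset g) with hD | hD
      · exact haN (Or.inr hD)
      · exact haN (Or.inl ⟨hLE, hD⟩)
    · exact lem_tstar_notC hbC hab (lem_mem_C hg hlt hcon hσmem.2.symm)
  exact le_antisymm hσA (le_csSup (lem_P_bddAbove a) ⟨⟨haA, hAb⟩, hgA⟩)

lemma lem_tstar_plateau_a (hg : Monotone g) (hlc : ∀ x : ℝ, ContinuousWithinAt g (Set.Iio x) x)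
    (hab : a ≤ b) (haN : a ∉ Nminus g ∪ Dset g) (hbC : b ∉ Cset g)
    {s : ℝ} (hs : s ∈ Pset g a b a) : tstar g s = tstar g a := by
  have hAb : tstar g a ≤ b := lem_tstar_le hbC hab
  have hgA : g (tstar g a) = g a := lem_g_tstar hg hlc hbC hab
  have hsSup := lem_sSup_Pa hg hlc hab haN hbC
  have hup : tstar g s ≤ tstar g a := by
    rw [← hsSup]
    exact le_csSup (lem_P_bddAbove a) (lem_tstar_mem_P hg hlc hbC hs)
  have hsA : s ≤ tstar g a := by
    rw [← hsSup]; exact le_csSup (lem_P_bddAbove a) hs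
  rcases eq_or_lt_of_le hs.1.1 with he | hlt
  · rw [← he]
  · rcases eq_or_lt_of_le hsA with he2 | hlt2
    · rw [he2]
      have h0 : tstar g a ∉ Cset g := lem_tstar_notC hbC hab
      exact if_neg h0
    · have hsC : s ∈ Cset g := lem_Ioo_subset_C hg hgA.symm ⟨hlt, hlt2⟩
      have sub : Set.Ioo a (tstar g a) ⊆ connectedComponentIn (Cset g) s :=
        isPreconnected_Ioo.subset_connectedComponentIn ⟨hlt, hlt2⟩
          (lem_Ioo_subset_C hg hgA.symm)
      have hlow : tstar g a ≤ tstar g s := by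
        have h1 : sSup (Set.Ioo a (tstar g a)) ≤ sSup (connectedComponentIn (Cset g) s) :=
          csSup_le_csSup ⟨b, lem_comp_subset_Iic hs.1.2 hbC hsC⟩
            (nonempty_Ioo.2 (lt_trans hlt hlt2)) sub
        rw [csSup_Ioo (lt_trans hlt hlt2)] at h1
        unfold tstar; rw [if_pos hsC]; exact h1
      exact le_antisymm hup hlow

lemma lem_part3 (hg : Monotone g) (hlc : ∀ x : ℝ, ContinuousWithinAt g (Set.Iio x) x)
    (hab : a ≤ b) (haN : a ∉ Nminus g ∪ Dset g) (hbC : b ∉ Cset g) :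
    ∀ t ∈ Set.Icc a (tstar g a),
      GContAt g (fun s => jump g (tstar g s)) (Set.Icc a b) t := by
  intro t ht
  have hAb : tstar g a ≤ b := lem_tstar_le hbC hab
  have hgA : g (tstar g a) = g a := lem_g_tstar hg hlc hbC hab
  have htIcc : t ∈ Set.Icc a b := ⟨ht.1, le_trans ht.2 hAb⟩
  have hgt : g t = g a := le_antisymm (hgA ▸ hg ht.2) (hg ht.1)
  by_cases hAD : tstar g a ∈ Dset g
  · apply lem_ball_collapse
    refine ⟨jump g (tstar g a), hAD, fun s hs hgs => ?_⟩
    have hgseq : g s = g a := by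
      rcases eq_or_lt_of_le (hg hs.1) with he | hlt
      · exact he.symm
      · exfalso
        have hAs : tstar g a < s := by
          by_contra hcon; push_neg at hcon
          have := hg hcon; rw [hgA] at this; linarith
        have h1 := lem_rLim_le hg hAs
        have h2 : jump g (tstar g a) = rLim g (tstar g a) - g (tstar g a) := rfl
        rw [abs_lt] at hgs
        rw [hgt] at hgs
        rw [hgA] at h2
        linarith [hgs.1]
    show jump g (tstar g s) = jump g (tstar g t)
    rw [lem_tstar_plateau_a hg hlc hab haN hbC ⟨hs, hgseq⟩,
        lem_tstar_plateau_a hg hlc hab haN hbC ⟨htIcc, hgt⟩]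
  · apply lem_main1 hg hlc hbC htIcc
    have hPeq : Pset g a b t = Pset g a b a := by
      unfold Pset; rw [hgt]
    rw [hPeq, lem_sSup_Pa hg hlc hab haN hbC]
    exact hAD
end Aux5
section Aux6
variable {g : ℝ → ℝ} {a b : ℝ}

lemma lem_part2 (hg : Monotone g) (hlc : ∀ x : ℝ, ContinuousWithinAt g (Set.Iio x) x)
    (hab : a ≤ b) (haN : a ∉ Nminus g ∪ Dset g) (hbC : b ∉ Cset g) :
    ∀ t ∈ (Set.Ioo (tstar g a) b ∩ Ag g a b) \ Hg g,
      ¬ GContAt g (fun s => jump g (tstar g s)) (Set.Icc a b) t := by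
  rintro t ⟨⟨htI, htA⟩, htH⟩ hcont
  have haA : a ≤ tstar g a := lem_le_tstar hbC hab
  have htIcc : t ∈ Set.Icc a b := ⟨le_trans haA htI.1.le, htI.2.le⟩
  have hσD : sSup (Pset g a b t) ∈ Dset g := htA
  have hσmem := lem_sigma_mem hg hlc htIcc (g := g)
  have htsP : tstar g t ∈ Pset g a b t := lem_tstar_mem_P hg hlc hbC ⟨htIcc, rfl⟩
  have hle : tstar g t ≤ sSup (Pset g a b t) := le_csSup (lem_P_bddAbove t) htsP
  have hσC : sSup (Pset g a b t) ∉ Cset g := lem_not_C_of_D hg hσD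
  have hσstar : tstar g (sSup (Pset g a b t)) = sSup (Pset g a b t) := if_neg hσC
  have hjσ : 0 < jump g (sSup (Pset g a b t)) := hσD
  rcases eq_or_lt_of_le hle with he | hlt
  · -- tstar g t = σ ; find s below the plateau
    set σ := sSup (Pset g a b t) with hσdef
    have hFt : jump g (tstar g t) = jump g σ := by rw [he]
    set α := sInf (Pset g a b t) with hαdef
    have hbdd : BddBelow (Pset g a b t) := ⟨a, fun s hs => hs.1.1⟩
    have hαt : α ≤ t := csInf_le hbdd ⟨htIcc, rfl⟩
    have hαa : a ≤ α := le_csInf (lem_P_ne htIcc) (fun s hs => hs.1.1)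
    rcases eq_or_lt_of_le (hg hαt) with he2 | hlt2
    · -- g α = g t
      have hαP : α ∈ Pset g a b t := ⟨⟨hαa, le_trans hαt htIcc.2⟩, he2⟩
      have hαa_lt : a < α := by
        rcases eq_or_lt_of_le hαa with heq | h3
        · exfalso
          have hta : t ∈ Pset g a b a := ⟨htIcc, by rw [← he2, ← heq]⟩
          have hle2 : t ≤ sSup (Pset g a b a) := le_csSup (lem_P_bddAbove a) hta
          rw [lem_sSup_Pa hg hlc hab haN hbC] at hle2
          exact absurd htI.1 (not_lt.2 hle2)
        · exact h3
      obtain ⟨δ, hδ, hprop⟩ := hcont (jump g σ / 2) (by linarith)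
      set δ₂ := min δ (jump g σ / 2) with hδ₂def
      have hδ₂ : 0 < δ₂ := lt_min hδ (by linarith)
      obtain ⟨s, hsIoo, hgs⟩ := lem_exists_left hlc
        (show g t - δ₂ < g α by rw [he2]; linarith) (show (0:ℝ) < α - a by linarith)
      have hsa : a < s := by have := hsIoo.1; linarith
      have hsIcc : s ∈ Set.Icc a b := ⟨hsa.le, le_trans hsIoo.2.le (le_trans hαt htIcc.2)⟩
      have hgs_lt : g s < g t := by
        rcases eq_or_lt_of_le (le_trans (hg hsIoo.2.le) (le_of_eq he2)) with heq | h3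
        · exfalso
          have : s ∈ Pset g a b t := ⟨hsIcc, heq⟩
          exact absurd (csInf_le hbdd this) (not_le.2 hsIoo.2)
        · exact h3
      have hFs := lem_below hg hlc hbC htIcc hsIcc hgs_lt
      have hFs0 := lem_jump_nonneg hg (tstar g s)
      have hdist : |g t - g s| < δ := by
        rw [abs_lt]; constructor
        · linarith [min_le_left δ (jump g σ / 2)]
        · have h4 : g t - g s < δ₂ := by linarith
          linarith [min_le_left δ (jump g σ / 2)]
      have hnorm := hprop s hsIcc hdist
      simp only [Real.norm_eq_abs] at hnorm
      rw [hFt] at hnorm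
      have h5 : g t - g s < δ₂ := by linarith
      have h6 : jump g (tstar g s) < jump g σ / 2 := by
        have := min_le_right δ (jump g σ / 2); linarith
      rw [abs_of_pos (by linarith)] at hnorm
      linarith
    · -- g α < g t : then t ∈ Hg, contradiction
      refine htH ⟨α, ?_, sSup (Pset g a b t), hσD, ⟨?_, lem_le_sigma htIcc⟩, ?_⟩
      · -- α ∈ Dset g
        have hrα : g t ≤ rLim g α := by
          refine le_csInf ⟨g (α + 1), α + 1, Set.mem_Ioi.mpr (lt_add_one α), rfl⟩ ?_
          rintro x ⟨u, hu, rfl⟩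
          obtain ⟨p, hp, hpu⟩ := exists_lt_of_csInf_lt (lem_P_ne htIcc) (Set.mem_Ioi.1 hu)
          exact le_trans (le_of_eq hp.2.symm) (hg hpu.le)
        show 0 < jump g α
        simp only [jump]; linarith
      · -- α < t
        rcases eq_or_lt_of_le hαt with heq | h3
        · exact absurd (heq ▸ rfl : g α = g t) (ne_of_lt hlt2)
        · exact h3
      · -- Ioo α σ ⊆ Cset g
        intro u hu
        obtain ⟨p, hp, hpu⟩ := exists_lt_of_csInf_lt (lem_P_ne htIcc) hu.1
        exact lem_mem_C hg hpu hu.2 (hp.2.trans hσmem.2.symm)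
  · -- tstar g t < σ : F t = 0, take s = σ
    have hFt : jump g (tstar g t) = 0 := by
      have h1 := lem_rLim_le hg hlt
      rw [hσmem.2] at h1
      have h2 : g (tstar g t) = g t := htsP.2
      have h3 := lem_jump_nonneg hg (tstar g t)
      simp only [jump] at h3 ⊢
      linarith
    obtain ⟨δ, hδ, hprop⟩ := hcont (jump g (sSup (Pset g a b t))) hjσ
    have hdist : |g t - g (sSup (Pset g a b t))| < δ := by
      rw [hσmem.2]; simpa using hδ
    have hnorm := hprop _ hσmem.1 hdist
    simp only [Real.norm_eq_abs] at hnorm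
    rw [hFt, hσstar] at hnorm
    rw [abs_of_nonpos (by linarith)] at hnorm
    linarith
end Aux6
/-- `g`-continuity of `Δg* : t ↦ Δg(t*)` on `[a,b]`. -/
theorem stmt16 (g : ℝ → ℝ) (hg : Monotone g)
    (hlc : ∀ x : ℝ, ContinuousWithinAt g (Set.Iio x) x)
    (a b : ℝ) (hab : a < b) (ha : a ∉ Nminus g ∪ Dset g)
    (hb : b ∉ Dset g ∪ Cset g ∪ Nplus g) :
    (∀ t ∈ (Set.Ioc (tstar g a) b \ Ag g a b) ∪ Hg g,
      GContAt g (fun s => jump g (tstar g s)) (Set.Icc a b) t) ∧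
    (∀ t ∈ (Set.Ioo (tstar g a) b ∩ Ag g a b) \ Hg g,
      ¬ GContAt g (fun s => jump g (tstar g s)) (Set.Icc a b) t) ∧
    (∀ t ∈ Set.Icc a (tstar g a),
      GContAt g (fun s => jump g (tstar g s)) (Set.Icc a b) t) := by
  have hbC : b ∉ Cset g := fun h => hb (Or.inl (Or.inr h))
  refine ⟨?_, lem_part2 hg hlc hab.le ha hbC, lem_part3 hg hlc hab.le ha hbC⟩
  intro t ht
  rcases ht with h | h
  · exact lem_main1 hg hlc hbC
      ⟨le_trans (lem_le_tstar hbC hab.le) h.1.1.le, h.1.2⟩ h.2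
  · exact lem_Hg_cont hg hlc h
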